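/- arXiv:2012.11451 — 6 statements merged into one kernel-verified Lean document; each statement's English description precedes it below -/
import Mathlib

section
/- For every n ≥ 2 and every shape s ∈ {+,-}^{n-1}, the number of permutations of [n] whose shape equals s is at most A_n, the number of alternating (down-up) permutations of [n]. Here the shape of a permutation π of [n] is the sequence s(π) = (s_1,…,s_{n-1}) with s_i = + iff π(i) < π(i+1). -/
/-- The shape of a permutation of `Fin n`: `s i = true` iff `π(i) < π(i+1)`. -/
def shape {n : ℕ} (π : Equiv.Perm (Fin n)) : Fin (n - 1) → Bool :=
  fun i => decide (π ⟨i.val, by have := i.isLt; omega⟩ < π ⟨i.val + 1, by have := i.isLt; omega⟩)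

/-- The shape of a down-up (alternating) permutation: `-,+,-,+,…`. -/
def downUpShape (n : ℕ) : Fin (n - 1) → Bool := fun i => decide (i.val % 2 = 1)


def fv : List Bool → ℕ → ℕ
  | [], p => if p = 0 then 1 else 0
  | b :: t, p =>
    if p ≤ t.length + 1 then
      if b then ∑ q ∈ Finset.Ico p (t.length + 1), fv t q
      else ∑ q ∈ Finset.range p, fv t q
    else 0

def Pv (s : List Bool) (r : ℕ) : ℕ := ∑ p ∈ Finset.range r, fv s p

def altL : ℕ → List Bool
  | 0 => []
  | k + 1 => true :: (altL k).map not

@[simp] lemma length_altL (k : ℕ) : (altL k).length = k := by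
  induction k with
  | zero => rfl
  | succ k ih => simp [altL, ih]

lemma map_not_map_not (l : List Bool) : (l.map not).map not = l := by
  simp [List.map_map, Function.comp_def]

lemma fv_nil (p : ℕ) : fv [] p = if p = 0 then 1 else 0 := rfl

lemma fv_true (t : List Bool) (p : ℕ) :
    fv (true :: t) p = ∑ q ∈ Finset.Ico p (t.length + 1), fv t q := by
  show ite _ _ _ = _
  rcases le_or_gt p (t.length + 1) with h | h
  · rw [if_pos h, if_pos rfl]
  · rw [if_neg (by omega), Finset.Ico_eq_empty (by omega), Finset.sum_empty]

lemma fv_false' (t : List Bool) {p : ℕ} (hp : p ≤ t.length + 1) :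
    fv (false :: t) p = ∑ q ∈ Finset.range p, fv t q := by
  show ite _ _ _ = _
  rw [if_pos hp]
  rfl

lemma fv_false_zero (t : List Bool) {p : ℕ} (hp : t.length + 1 < p) :
    fv (false :: t) p = 0 := by
  show ite _ _ _ = _
  rw [if_neg (by omega)]

lemma fv_zero_of_gt : ∀ {s : List Bool} {p : ℕ}, s.length < p → fv s p = 0
  | [], p, h => by rw [fv_nil, if_neg (by simp at h; omega)]
  | true :: t, p, h => by
      rw [fv_true, Finset.Ico_eq_empty (by simp at h; omega), Finset.sum_empty]
  | false :: t, p, h => fv_false_zero t (by simp at h; omega)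

lemma Pv_mono (s : List Bool) {r r' : ℕ} (h : r ≤ r') : Pv s r ≤ Pv s r' :=
  Finset.sum_le_sum_of_subset (Finset.range_subset_range.mpr h)

lemma Pv_stable (s : List Bool) {r : ℕ} (h : s.length + 1 ≤ r) :
    Pv s r = Pv s (s.length + 1) := by
  unfold Pv
  exact (Finset.sum_subset (Finset.range_subset_range.mpr h)
    (fun x _ hx => fv_zero_of_gt (by simp at hx; omega))).symm

lemma fv_map_not : ∀ (t : List Bool) (p : ℕ), p ≤ t.length →
    fv (t.map not) p = fv t (t.length - p)
  | [], p, hp => by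
      simp only [List.length_nil, Nat.le_zero] at hp
      subst hp; rfl
  | true :: t, p, hp => by
      simp only [List.length_cons] at hp
      rw [List.map_cons, show (not true) = false from rfl,
        fv_false' _ (by simp; omega)]
      rw [show (true :: t).length - p = t.length + 1 - p by simp]
      rw [fv_true]
      rw [Finset.sum_congr rfl (fun q hq => fv_map_not t q (by simp at hq; omega))]
      rw [Finset.sum_Ico_eq_sum_range, show t.length + 1 - (t.length + 1 - p) = p by omega]
      rw [← Finset.sum_range_reflect (fun j => fv t (t.length + 1 - p + j)) p]
      exact Finset.sum_congr rfl fun q hq => by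
        simp only [Finset.mem_range] at hq; congr 1 <;> omega
  | false :: t, p, hp => by
      simp only [List.length_cons] at hp
      rw [List.map_cons, show (not false) = true from rfl, fv_true]
      rw [show (false :: t).length - p = t.length + 1 - p by simp]
      rw [fv_false' _ (by omega)]
      rw [List.length_map]
      rw [Finset.sum_congr rfl (fun q hq => fv_map_not t q (by simp [Finset.mem_Ico] at hq; omega))]
      rw [Finset.sum_Ico_eq_sum_range, show t.length + 1 - p = t.length + 1 - p from rfl]
      rw [← Finset.sum_range_reflect (fun j => fv t j) (t.length + 1 - p)]
      exact Finset.sum_congr rfl fun j hj => by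
        simp only [Finset.mem_range] at hj; congr 1 <;> omega

lemma fv_true_eq_Pv (t : List Bool) {p : ℕ} (hp : p ≤ t.length + 1) :
    fv (true :: t) p = Pv (t.map not) (t.length + 1 - p) := by
  rw [fv_true]
  have hrw : ∀ q ∈ Finset.Ico p (t.length + 1), fv t q = fv (t.map not) (t.length - q) := by
    intro q hq
    simp only [Finset.mem_Ico] at hq
    have := fv_map_not (t.map not) q (by simp; omega)
    rwa [map_not_map_not, List.length_map] at this
  rw [Finset.sum_congr rfl hrw, Finset.sum_Ico_eq_sum_range]
  unfold Pv
  rw [← Finset.sum_range_reflect (fun j => fv (t.map not) j) (t.length + 1 - p)]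
  exact Finset.sum_congr rfl fun j hj => by
    simp only [Finset.mem_range] at hj; congr 1 <;> omega

lemma Pv_map_not_total (l : List Bool) :
    Pv (l.map not) (l.length + 1) = Pv l (l.length + 1) := by
  unfold Pv
  rw [Finset.sum_congr rfl (fun p hp => fv_map_not l p (by simp at hp; omega))]
  rw [← Finset.sum_range_reflect (fun j => fv l j) (l.length + 1)]
  exact Finset.sum_congr rfl fun j hj => by
    simp only [Finset.mem_range] at hj; congr 1 <;> omega

lemma Pv_le_alt : ∀ (k : ℕ) (s : List Bool), s.length = k → ∀ r, Pv s r ≤ Pv (altL k) r := by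
  intro k
  induction k with
  | zero =>
    intro s hs r
    rw [List.length_eq_zero_iff] at hs
    subst hs
    exact le_refl _
  | succ k ih =>
    intro s hs r
    rcases s with _ | ⟨b, t⟩
    · simp at hs
    have ht : t.length = k := by simpa using hs
    have haltfv : ∀ p, p ≤ k + 1 → fv (altL (k + 1)) p = Pv (altL k) (k + 1 - p) := by
      intro p hp
      show fv (true :: (altL k).map not) p = _
      rw [fv_true_eq_Pv _ (by simp; omega), map_not_map_not]
      simp
    cases b with
    | true =>
      apply Finset.sum_le_sum
      intro p _
      rcases le_or_gt p (k + 1) with hp | hp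
      · rw [fv_true_eq_Pv t (by omega), ht, haltfv p hp]
        exact ih (t.map not) (by simp [ht]) _
      · rw [fv_zero_of_gt (by simp [ht]; omega)]
        exact Nat.zero_le _
    | false =>
      have key : ∀ r', r' ≤ k + 2 → Pv (false :: t) r' ≤ Pv (altL (k + 1)) r' := by
        intro r' hr'
        unfold Pv
        rw [Finset.sum_congr rfl (fun p hp => haltfv p (by simp at hp; omega))]
        rw [← Finset.sum_range_reflect (fun p => Pv (altL k) (k + 1 - p)) r']
        apply Finset.sum_le_sum
        intro p hp
        simp only [Finset.mem_range] at hp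
        rw [fv_false' t (by omega)]
        calc (∑ q ∈ Finset.range p, fv t q) = Pv t p := rfl
          _ ≤ Pv (altL k) p := ih t ht p
          _ ≤ Pv (altL k) (k + 1 - (r' - 1 - p)) := Pv_mono _ (by omega)
      rcases le_or_gt r (k + 2) with hr | hr
      · exact key r hr
      · have h1 : Pv (false :: t) r = Pv (false :: t) (k + 2) := by
          have := Pv_stable (false :: t) (r := r) (by simp [ht]; omega)
          simpa [ht] using this
        have h2 : Pv (altL (k + 1)) (k + 2) = Pv (altL (k + 1)) r := by
          have := Pv_stable (altL (k + 1)) (r := r) (by simp; omega)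
          simp only [length_altL] at this
          exact this.symm
        rw [h1, ← h2]
        exact key _ le_rfl

lemma Pv_total_le (s : List Bool) :
    Pv s (s.length + 1) ≤ Pv ((altL s.length).map not) (s.length + 1) := by
  have h1 := Pv_le_alt s.length s rfl (s.length + 1)
  have h2 := Pv_map_not_total (altL s.length)
  simp only [length_altL] at h2
  omega

lemma altL_ofFn : ∀ k : ℕ,
    altL k = List.ofFn (fun i : Fin k => decide (i.1 % 2 = 0)) ∧
    (altL k).map not = List.ofFn (fun i : Fin k => decide (i.1 % 2 = 1)) := by
  intro k
  induction k with
  | zero => exact ⟨rfl, rfl⟩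
  | succ k ih =>
    constructor
    · show true :: (altL k).map not = _
      rw [List.ofFn_succ, ih.2]
      congr 1
      exact congrArg List.ofFn (funext fun i => by
        simp only [Fin.val_succ, decide_eq_decide]; omega)
    · show ((true : Bool) :: (altL k).map not).map not = _
      rw [List.map_cons, map_not_map_not, ih.1, List.ofFn_succ]
      congr 1
      exact congrArg List.ofFn (funext fun i => by
        simp only [Fin.val_succ, decide_eq_decide]; omega)

/-- order-friendly shape on permutations -/
def shapeF {m : ℕ} (π : Equiv.Perm (Fin (m + 1))) : Fin m → Bool :=
  fun i => decide (π i.castSucc < π i.succ)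

def buildPerm {m : ℕ} (p : Fin (m + 2)) (e : Equiv.Perm (Fin (m + 1))) :
    Equiv.Perm (Fin (m + 2)) :=
  (finSuccEquiv (m + 1)).trans ((Equiv.optionCongr e).trans (finSuccEquiv' p).symm)

@[simp] lemma buildPerm_zero {m : ℕ} (p : Fin (m + 2)) (e : Equiv.Perm (Fin (m + 1))) :
    buildPerm p e 0 = p := by
  simp [buildPerm]

@[simp] lemma buildPerm_succ {m : ℕ} (p : Fin (m + 2)) (e : Equiv.Perm (Fin (m + 1)))
    (i : Fin (m + 1)) : buildPerm p e i.succ = p.succAbove (e i) := by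
  simp [buildPerm]

/-- the decomposition equivalence -/
def permDecomp (m : ℕ) : Fin (m + 2) × Equiv.Perm (Fin (m + 1)) ≃ Equiv.Perm (Fin (m + 2)) where
  toFun x := buildPerm x.1 x.2
  invFun π := (π 0,
    Equiv.removeNone ((finSuccEquiv (m + 1)).symm.trans (π.trans (finSuccEquiv' (π 0)))))
  left_inv := by
    rintro ⟨p, e⟩
    dsimp only
    rw [buildPerm_zero]
    have key : ∀ i, ((finSuccEquiv (m + 1)).symm.trans
        ((buildPerm p e).trans (finSuccEquiv' p))) (some i) = some (e i) := by
      intro i; simp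
    have h2 : Equiv.removeNone ((finSuccEquiv (m + 1)).symm.trans
        ((buildPerm p e).trans (finSuccEquiv' p))) = e := by
      refine Equiv.ext fun i => ?_
      apply Option.some_injective
      rw [Equiv.removeNone_some _ ⟨e i, key i⟩, key i]
    exact Prod.ext rfl h2
  right_inv := by
    intro π
    dsimp only
    refine Equiv.ext fun x => ?_
    induction x using Fin.cases with
    | zero => simp
    | succ i =>
      rw [buildPerm_succ]
      set E := (finSuccEquiv (m + 1)).symm.trans (π.trans (finSuccEquiv' (π 0))) with hE
      have hnone : E (some i) ≠ none := by
        simp only [hE, Equiv.trans_apply, finSuccEquiv_symm_some]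
        intro h
        have h2 : π i.succ = π 0 := by
          apply (finSuccEquiv' (π 0)).injective
          rw [h, finSuccEquiv'_at]
        exact (Fin.succ_ne_zero i) (π.injective h2)
      obtain ⟨y, hy⟩ := Option.ne_none_iff_exists'.mp hnone
      have hrm : Equiv.removeNone E i = y := by
        apply Option.some_injective
        rw [Equiv.removeNone_some E ⟨y, hy⟩, hy]
      rw [hrm]
      have h3 : finSuccEquiv' (π 0) (π i.succ) = some y := by
        simpa [hE] using hy
      have h4 := congrArg (finSuccEquiv' (π 0)).symm h3
      rw [Equiv.symm_apply_apply, finSuccEquiv'_symm_some] at h4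
      exact h4.symm

lemma shapeF_buildPerm_zero {m : ℕ} (a : Fin (m + 2)) (e : Equiv.Perm (Fin (m + 1))) :
    shapeF (buildPerm a e) 0 = decide (a.1 ≤ (e 0).1) := by
  show decide (buildPerm a e (Fin.castSucc 0) < buildPerm a e (Fin.succ 0)) = _
  rw [Fin.castSucc_zero, buildPerm_zero, buildPerm_succ]
  simp only [decide_eq_decide]
  rw [Fin.lt_succAbove_iff_le_castSucc, Fin.le_def, Fin.coe_castSucc]

lemma shapeF_buildPerm_succ {m : ℕ} (a : Fin (m + 2)) (e : Equiv.Perm (Fin (m + 1)))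
    (j : Fin m) : shapeF (buildPerm a e) j.succ = shapeF e j := by
  show decide (buildPerm a e (Fin.castSucc j.succ) < buildPerm a e (Fin.succ j.succ)) = _
  rw [← Fin.succ_castSucc, buildPerm_succ, buildPerm_succ]
  show _ = decide (e (Fin.castSucc j) < e (Fin.succ j))
  simp only [decide_eq_decide]
  exact Fin.succAbove_lt_succAbove_iff

lemma shapeF_buildPerm_eq_iff {m : ℕ} (a : Fin (m + 2)) (e : Equiv.Perm (Fin (m + 1)))
    (s : Fin (m + 1) → Bool) :
    shapeF (buildPerm a e) = s ↔
      ((shapeF e = fun i => s i.succ) ∧ s 0 = decide (a.1 ≤ (e 0).1)) := by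
  constructor
  · rintro rfl
    exact ⟨funext fun j => (shapeF_buildPerm_succ a e j).symm,
      shapeF_buildPerm_zero a e⟩
  · rintro ⟨h1, h2⟩
    funext i
    induction i using Fin.cases with
    | zero => rw [shapeF_buildPerm_zero, h2]
    | succ j => rw [shapeF_buildPerm_succ, h1]

def FC (m : ℕ) (s : Fin m → Bool) (p : Fin (m + 1)) : ℕ :=
  Fintype.card {π : Equiv.Perm (Fin (m + 1)) // shapeF π = s ∧ π 0 = p}

lemma FC_zero (s : Fin 0 → Bool) (p : Fin 1) : FC 0 s p = 1 := by
  have h : ∀ π : Equiv.Perm (Fin 1), shapeF π = s ∧ π 0 = p :=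
    fun π => ⟨funext fun i => i.elim0, Subsingleton.elim _ _⟩
  rw [FC, Fintype.card_congr (Equiv.subtypeUnivEquiv h), Fintype.card_perm]
  simp

def prodFstFix {A B : Type*} (p : A) (Q : B → Prop) :
    {x : A × B // Q x.2 ∧ x.1 = p} ≃ {e : B // Q e} where
  toFun x := ⟨x.1.2, x.2.1⟩
  invFun e := ⟨(p, e.1), e.2, rfl⟩
  left_inv := by rintro ⟨⟨a, b⟩, hb, rfl⟩; rfl
  right_inv := by rintro ⟨b, hb⟩; rfl

lemma FC_succ (m : ℕ) (s : Fin (m + 1) → Bool) (p : Fin (m + 2)) :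
    FC (m + 1) s p =
      ∑ q : Fin (m + 1), if s 0 = decide (p.1 ≤ q.1) then FC m (fun i => s i.succ) q else 0 := by
  classical
  -- Step 1: the subtype equivalence
  have E : {π : Equiv.Perm (Fin (m + 2)) // shapeF π = s ∧ π 0 = p} ≃
      {e : Equiv.Perm (Fin (m + 1)) //
        ((shapeF e = fun i => s i.succ) ∧ s 0 = decide (p.1 ≤ (e 0).1))} := by
    refine Equiv.trans (Equiv.subtypeEquiv (permDecomp m).symm (fun π => ?_)) (prodFstFix p _)
    obtain ⟨x, rfl⟩ := (permDecomp m).surjective π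
    rw [Equiv.symm_apply_apply]
    obtain ⟨a, e⟩ := x
    show (shapeF (buildPerm a e) = s ∧ buildPerm a e 0 = p) ↔ _
    rw [buildPerm_zero, shapeF_buildPerm_eq_iff]
    constructor
    · rintro ⟨⟨h1, h2⟩, rfl⟩; exact ⟨⟨h1, h2⟩, rfl⟩
    · rintro ⟨⟨h1, h2⟩, rfl⟩; exact ⟨⟨h1, h2⟩, rfl⟩
  rw [FC, Fintype.card_congr E]
  -- Step 2: fiberwise count over e 0
  rw [Fintype.card_subtype]
  rw [Finset.card_eq_sum_card_fiberwise
    (f := fun e : Equiv.Perm (Fin (m + 1)) => e 0) (t := Finset.univ)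
    (fun x _ => Finset.mem_univ _)]
  apply Finset.sum_congr rfl
  intro q _
  rw [Finset.filter_filter]
  by_cases hq : s 0 = decide (p.1 ≤ q.1)
  · rw [if_pos hq, FC, Fintype.card_subtype]
    congr 1
    apply Finset.filter_congr
    intro e _
    constructor
    · rintro ⟨⟨h1, _⟩, h3⟩; exact ⟨h1, h3⟩
    · rintro ⟨h1, h3⟩; exact ⟨⟨h1, by rw [h3]; exact hq⟩, h3⟩
  · rw [if_neg hq]
    rw [Finset.card_eq_zero, Finset.filter_eq_empty_iff]
    rintro e _ ⟨⟨_, h2⟩, h3⟩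
    rw [h3] at h2
    exact hq h2

lemma FC_eq_fv : ∀ (m : ℕ) (s : Fin m → Bool) (p : Fin (m + 1)),
    FC m s p = fv (List.ofFn s) p.1 := by
  intro m
  induction m with
  | zero =>
    intro s p
    rw [FC_zero]
    have hp : p.1 = 0 := by omega
    rw [List.ofFn_zero, hp, fv_nil, if_pos rfl]
  | succ m ih =>
    intro s p
    rw [FC_succ, List.ofFn_succ]
    have hlen : (List.ofFn fun i : Fin m => s i.succ).length = m := by simp
    have hsum : (∑ q : Fin (m + 1), if s 0 = decide (p.1 ≤ q.1)
        then FC m (fun i => s i.succ) q else 0) =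
        ∑ x ∈ Finset.range (m + 1), if s 0 = decide (p.1 ≤ x)
          then fv (List.ofFn fun i : Fin m => s i.succ) x else 0 := by
      rw [← Fin.sum_univ_eq_sum_range]
      apply Finset.sum_congr rfl
      intro q _
      by_cases h : s 0 = decide (p.1 ≤ q.1)
      · rw [if_pos h, if_pos h, ih]
      · rw [if_neg h, if_neg h]
    rw [hsum]
    cases h0 : s 0 with
    | true =>
      rw [fv_true]
      rw [← Finset.sum_filter]
      apply Finset.sum_congr
      · ext x
        simp only [Finset.mem_filter, Finset.mem_range, Finset.mem_Ico, hlen]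
        constructor
        · rintro ⟨h1, h2⟩
          simp only [true_eq_decide_iff] at h2
          omega
        · rintro ⟨h1, h2⟩
          exact ⟨h2, by simp [h1]⟩
      · intros; rfl
    | false =>
      rw [fv_false' _ (by rw [hlen]; omega)]
      rw [← Finset.sum_filter]
      apply Finset.sum_congr
      · ext x
        simp only [Finset.mem_filter, Finset.mem_range]
        constructor
        · rintro ⟨h1, h2⟩
          simp only [false_eq_decide_iff, not_le] at h2
          omega
        · rintro h1
          have hp : p.1 ≤ m + 1 := by omega
          exact ⟨by omega, by simp; omega⟩
      · intros; rfl

lemma card_shapeF (m : ℕ) (s : Fin m → Bool) :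
    Fintype.card {π : Equiv.Perm (Fin (m + 1)) // shapeF π = s} =
      Pv (List.ofFn s) (m + 1) := by
  classical
  rw [Fintype.card_subtype]
  rw [Finset.card_eq_sum_card_fiberwise
    (f := fun π : Equiv.Perm (Fin (m + 1)) => π 0) (t := Finset.univ)
    (fun x _ => Finset.mem_univ _)]
  have : ∀ p : Fin (m + 1),
      ((Finset.univ.filter fun π : Equiv.Perm (Fin (m+1)) => shapeF π = s).filter
        fun π => π 0 = p).card = fv (List.ofFn s) p.1 := by
    intro p
    rw [Finset.filter_filter, ← FC_eq_fv, FC, Fintype.card_subtype]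
  rw [Finset.sum_congr rfl fun p _ => this p]
  rw [Fin.sum_univ_eq_sum_range (fun x => fv (List.ofFn s) x) (m + 1)]
  rfl


lemma shape_eq_shapeF {m : ℕ} (π : Equiv.Perm (Fin (m + 1))) : shape π = shapeF π := rfl

/-- The alternating shape is the most popular among all shapes. -/
theorem stmt_0 (n : ℕ) (hn : 2 ≤ n) (s : Fin (n - 1) → Bool) :
    Nat.card {π : Equiv.Perm (Fin n) | shape π = s} ≤
      Nat.card {π : Equiv.Perm (Fin n) | shape π = downUpShape n} := by
  classical
  obtain ⟨m, rfl⟩ : ∃ m, n = m + 1 := ⟨n - 1, by omega⟩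
  have key : ∀ t : Fin m → Bool,
      Nat.card {π : Equiv.Perm (Fin (m + 1)) | shape π = t} = Pv (List.ofFn t) (m + 1) := by
    intro t
    rw [Nat.card_congr (Equiv.subtypeEquivRight
      (q := fun π : Equiv.Perm (Fin (m + 1)) => shapeF π = t)
      (fun π => by rw [Set.mem_setOf_eq, shape_eq_shapeF]))]
    rw [Nat.card_eq_fintype_card, card_shapeF]
  rw [key s, key (downUpShape (m + 1))]
  have hd : List.ofFn (downUpShape (m + 1)) = (altL m).map not := by
    rw [(altL_ofFn m).2]; rfl
  rw [hd]
  have h := Pv_total_le (List.ofFn s)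
  simp only [List.length_ofFn] at h
  exact h
end

section
/- There exists c > 0 such that for all sufficiently large n there is a permutation of [n] containing no weak twins of length greater than n/2 - c·n^{1/3}. Hence wt(n) ≤ n/2 - Ω(n^{1/3}). -/
/-!
Cut the positions into `k ≈ √n` consecutive blocks of odd, strictly increasing sizes
`1, 3, 5, …` (the last one absorbing the remainder), and let `π` give the blocks decreasing
ranges of values, increasing inside each block. For positions `p < q`, `π p < π q` exactly when
`p` and `q` share a block, so two weak twins switch blocks at the same steps. Peeling off the top
run of the twins together with everything else in its lower block shows, by parity when both
twins sit in one block and by the gap of at least `2` between distinct odd block sizes otherwise,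
that at least one position per block is left unused: `2w + k ≤ n`. Finally `k ≥ n^{1/3}`.
-/

/-- `π` contains a pair of weak twins of length `w`: two subsequences on disjoint
position sets, of length `w` each, whose consecutive elements rise and fall in
the same way. -/
def HasWeakTwins {n : ℕ} (π : Equiv.Perm (Fin n)) (w : ℕ) : Prop :=
  ∃ a b : Fin w → Fin n, StrictMono a ∧ StrictMono b ∧ (∀ i j, a i ≠ b j) ∧
    ∀ i : ℕ, ∀ h : i + 1 < w,
      (π (a ⟨i, by omega⟩) < π (a ⟨i + 1, h⟩) ↔ π (b ⟨i, by omega⟩) < π (b ⟨i + 1, h⟩))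

open Finset Function

lemma Fin.card_filter_le_val_lt {n a b : ℕ} (hab : a ≤ b) (hb : b ≤ n) :
    #{p : Fin n | a ≤ (p : ℕ) ∧ (p : ℕ) < b} = b - a := by
  rw [show (filter (fun p : Fin n => a ≤ (p : ℕ) ∧ (p : ℕ) < b) univ) =
      filter (fun p : Fin n => (p : ℕ) < b) univ \ filter (fun p : Fin n => (p : ℕ) < a) univ by
    ext p; simp only [mem_sdiff, mem_filter, mem_univ, true_and]; omega,
    card_sdiff_of_subset (fun p hp => by simp only [mem_filter, mem_univ, true_and] at hp ⊢; omega),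
    Fin.card_filter_val_lt, Fin.card_filter_val_lt]
  omega

lemma Finset.sum_add_card_le_sum_add_card_of_subset {κ : Type*} [DecidableEq κ] {X Y : Finset κ}
    {c : κ → ℕ} (hXY : X ⊆ Y) (hc : ∀ j ∈ Y, 1 ≤ c j) :
    ∑ j ∈ X, c j + #Y ≤ ∑ j ∈ Y, c j + #X := by
  have hsum := sum_sdiff (f := c) hXY
  have hcard := card_sdiff_add_card_eq_card hXY
  have hdiff : #(Y \ X) ≤ ∑ j ∈ Y \ X, c j := by
    simpa using card_nsmul_le_sum (Y \ X) c 1 fun j hj => hc j (mem_sdiff.mp hj).1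
  omega

lemma Monotone.eq_iff_eq_of_succ {w : ℕ} {f g : Fin w → ℕ} (hf : Monotone f) (hg : Monotone g)
    (h : ∀ i (hi : i + 1 < w), f ⟨i, by omega⟩ = f ⟨i + 1, hi⟩ ↔ g ⟨i, by omega⟩ = g ⟨i + 1, hi⟩)
    {i j : Fin w} (hij : i ≤ j) : f i = f j ↔ g i = g j := by
  obtain ⟨j, hj⟩ := j
  change i.val ≤ j at hij
  induction j, hij using Nat.le_induction with
  | base => simp
  | succ k hik ih =>
    have ih := ih (by omega)
    have hk : (⟨k, by omega⟩ : Fin w) ≤ ⟨k + 1, hj⟩ := Fin.mk_le_mk.mpr k.le_succ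
    have hfk := hf hk
    have hgk := hg hk
    have hfi := hf (show i ≤ ⟨k, by omega⟩ from hik)
    have hgi := hg (show i ≤ ⟨k, by omega⟩ from hik)
    have := h k hj
    omega

lemma Monotone.le_iff_le_of_succ {w : ℕ} {f g : Fin w → ℕ} (hf : Monotone f) (hg : Monotone g)
    (h : ∀ i (hi : i + 1 < w), f ⟨i, by omega⟩ = f ⟨i + 1, hi⟩ ↔ g ⟨i, by omega⟩ = g ⟨i + 1, hi⟩)
    (i j : Fin w) : f i ≤ f j ↔ g i ≤ g j := by
  rcases le_total i j with hij | hji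
  · exact iff_of_true (hf hij) (hg hij)
  · have := hf.eq_iff_eq_of_succ hg h hji
    have := hf hji
    have := hg hji
    omega

namespace WeakTwins

section Rank

variable {α : Type*} [LinearOrder α] {n : ℕ}

def rank (key : Fin n → α) (p : Fin n) : ℕ := #{q | key q < key p}

lemma rank_lt (key : Fin n → α) (p : Fin n) : rank key p < n := by
  calc rank key p < #(univ : Finset (Fin n)) :=
        card_lt_card (filter_ssubset.mpr ⟨p, mem_univ p, lt_irrefl _⟩)
    _ = n := card_fin n

lemma rank_lt_rank_of_lt {key : Fin n → α} {p q : Fin n} (h : key p < key q) :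
    rank key p < rank key q := by
  refine card_lt_card ⟨fun r hr => ?_, fun hsub => ?_⟩
  · simp only [mem_filter, mem_univ, true_and] at hr ⊢
    exact hr.trans h
  · simpa using hsub (mem_filter.mpr ⟨mem_univ p, h⟩)

lemma rank_lt_rank_iff {key : Fin n → α} (hkey : Injective key) {p q : Fin n} :
    rank key p < rank key q ↔ key p < key q := by
  refine ⟨fun h => ?_, rank_lt_rank_of_lt⟩
  rcases lt_trichotomy (key p) (key q) with hlt | heq | hgt
  · exact hlt
  · exact absurd h (by rw [hkey heq]; exact lt_irrefl _)
  · exact absurd h (rank_lt_rank_of_lt hgt).not_gt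

noncomputable def rankPerm {key : Fin n → α} (hkey : Injective key) : Equiv.Perm (Fin n) :=
  Equiv.ofBijective (fun p => ⟨rank key p, rank_lt key p⟩) <|
    Finite.injective_iff_bijective.mp fun _ _ h => hkey <| le_antisymm
      (not_lt.mp fun hqp => (rank_lt_rank_of_lt hqp).ne' (congrArg Fin.val h))
      (not_lt.mp fun hpq => (rank_lt_rank_of_lt hpq).ne (congrArg Fin.val h))

lemma rankPerm_lt_rankPerm_iff {key : Fin n → α} (hkey : Injective key) {p q : Fin n} :
    rankPerm hkey p < rankPerm hkey q ↔ key p < key q :=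
  Fin.lt_def.trans (rank_lt_rank_iff hkey)

end Rank

-- Under `layeredPerm β`, later blocks of `β` get smaller values; values increase inside a block.
def layerKey {n : ℕ} (β : Fin n → ℕ) (p : Fin n) : ℕᵒᵈ ×ₗ Fin n :=
  toLex (OrderDual.toDual (β p), p)

lemma layerKey_injective {n : ℕ} (β : Fin n → ℕ) : Injective (layerKey β) :=
  fun _ _ h => congrArg (fun x => (ofLex x).2) h

noncomputable def layeredPerm {n : ℕ} (β : Fin n → ℕ) : Equiv.Perm (Fin n) :=
  rankPerm (layerKey_injective β)

lemma layeredPerm_lt_layeredPerm_iff {n : ℕ} {β : Fin n → ℕ} (hβ : Monotone β) {p q : Fin n}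
    (hpq : p < q) : layeredPerm β p < layeredPerm β q ↔ β p = β q := by
  rw [layeredPerm, rankPerm_lt_rankPerm_iff, layerKey, layerKey, Prod.Lex.toLex_lt_toLex]
  have := hβ hpq.le
  simp only [OrderDual.toDual_lt_toDual, EmbeddingLike.apply_eq_iff_eq, hpq, and_true]
  omega

lemma two_mul_add_card_pair_le {S : Set ℕ} {c : ℕ → ℕ} (hc : StrictMonoOn c S)
    (hodd : ∀ j ∈ S, Odd (c j)) {u v r : ℕ} (hu : u ∈ S) (hv : v ∈ S)
    (hr : r ≤ c (min u v)) (hloop : u = v → 2 * r ≤ c u) :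
    2 * r + #({u, v} : Finset ℕ) ≤ ∑ j ∈ {u, v}, c j := by
  obtain ⟨a, ha⟩ := hodd u hu
  obtain ⟨b, hb⟩ := hodd v hv
  rcases lt_trichotomy u v with huv | rfl | huv
  · have := hc hu hv huv
    rw [min_eq_left huv.le] at hr
    rw [sum_pair huv.ne, card_pair huv.ne]
    omega
  · have := hloop rfl
    simp only [insert_eq_of_mem (mem_singleton_self u), sum_singleton, card_singleton]
    omega
  · have := hc hv hu huv
    rw [min_eq_right huv.le] at hr
    rw [sum_pair huv.ne', card_pair huv.ne']
    omega

section Blocks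

-- `A i` and `B i` are the blocks holding the `i`-th entries of the two twins.
variable {ι : Type*} (A B : ι → ℕ)

def load (I : Finset ι) (j : ℕ) : ℕ := #{i ∈ I | A i = j} + #{i ∈ I | B i = j}

def blocks (I : Finset ι) : Finset ℕ := I.image A ∪ I.image B

variable {A B}

lemma load_mono {I J : Finset ι} (hJI : J ⊆ I) (j : ℕ) : load A B J j ≤ load A B I j :=
  add_le_add (card_le_card (filter_subset_filter _ hJI)) (card_le_card (filter_subset_filter _ hJI))

lemma blocks_mono {I J : Finset ι} (hJI : J ⊆ I) : blocks A B J ⊆ blocks A B I :=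
  union_subset_union (image_subset_image hJI) (image_subset_image hJI)

lemma card_filter_or_le_load (I : Finset ι) (j : ℕ) :
    #{i ∈ I | A i = j ∨ B i = j} ≤ load A B I j := by
  classical
  rw [filter_or]
  exact card_union_le _ _

lemma eq_iff_eq_of_forall_le {I : Finset ι} (hAB : ∀ i ∈ I, ∀ i' ∈ I, A i ≤ A i' ↔ B i ≤ B i')
    {i₀ : ι} (hi₀ : i₀ ∈ I) (hmax : ∀ i ∈ I, A i ≤ A i₀) {i : ι} (hi : i ∈ I) :
    A i = A i₀ ↔ B i = B i₀ :=
  ⟨fun h => le_antisymm ((hAB i hi i₀ hi₀).mp (hmax i hi)) ((hAB i₀ hi₀ i hi).mp h.ge),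
    fun h => le_antisymm (hmax i hi) ((hAB i₀ hi₀ i hi).mpr h.ge)⟩

lemma disjoint_blocks_filter_not_min {I : Finset ι}
    (hAB : ∀ i ∈ I, ∀ i' ∈ I, A i ≤ A i' ↔ B i ≤ B i') {i₀ : ι} (hi₀ : i₀ ∈ I)
    (hmax : ∀ i ∈ I, A i ≤ A i₀) :
    Disjoint {A i₀, B i₀}
      (blocks A B {i ∈ I | ¬(A i = min (A i₀) (B i₀) ∨ B i = min (A i₀) (B i₀))}) := by
  have hJ : ∀ i ∈ I, ¬(A i = min (A i₀) (B i₀) ∨ B i = min (A i₀) (B i₀)) →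
      A i ≠ A i₀ ∧ A i ≠ B i₀ ∧ B i ≠ A i₀ ∧ B i ≠ B i₀ := fun i hi hne => by
    have := hmax i hi
    have := (hAB i hi i₀ hi₀).mp (hmax i hi)
    have := eq_iff_eq_of_forall_le hAB hi₀ hmax hi
    omega
  simp only [disjoint_left, mem_insert, mem_singleton, blocks, mem_union, mem_image, mem_filter]
  rintro j hj (⟨i, ⟨hi, hne⟩, rfl⟩ | ⟨i, ⟨hi, hne⟩, rfl⟩) <;> have := hJ i hi hne <;> omega

theorem two_mul_card_add_card_blocks_le {c : ℕ → ℕ} (I : Finset ι)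
    (hAB : ∀ i ∈ I, ∀ i' ∈ I, A i ≤ A i' ↔ B i ≤ B i')
    (hc : StrictMonoOn c (blocks A B I)) (hodd : ∀ j ∈ blocks A B I, Odd (c j))
    (hload : ∀ j, load A B I j ≤ c j) :
    2 * #I + #(blocks A B I) ≤ ∑ j ∈ blocks A B I, c j := by
  induction I using Finset.strongInduction with
  | H I ih =>
  rcases I.eq_empty_or_nonempty with rfl | hI
  · simp [blocks]
  obtain ⟨i₀, hi₀, hmax⟩ := I.exists_max_image A hI
  set u := A i₀
  set v := B i₀
  set m := min u v with hm
  -- Deleting the entries in the lower block `m` of the top run frees both blocks `u` and `v`.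
  set R := {i ∈ I | A i = m ∨ B i = m}
  set J := {i ∈ I | ¬(A i = m ∨ B i = m)}
  have hJI : J ⊂ I :=
    filter_ssubset.mpr ⟨i₀, hi₀, not_not.mpr ((min_choice u v).imp Eq.symm Eq.symm)⟩
  have hIH := ih J hJI (fun i hi i' hi' => hAB i (hJI.subset hi) i' (hJI.subset hi'))
    (hc.mono (coe_subset.mpr (blocks_mono hJI.subset)))
    (fun j hj => hodd j (blocks_mono hJI.subset hj))
    (fun j => (load_mono hJI.subset j).trans (hload j))
  have hfresh : Disjoint {u, v} (blocks A B J) := disjoint_blocks_filter_not_min hAB hi₀ hmax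
  have hsub : {u, v} ∪ blocks A B J ⊆ blocks A B I :=
    union_subset (insert_subset (mem_union_left _ (mem_image_of_mem A hi₀))
      (singleton_subset_iff.mpr (mem_union_right _ (mem_image_of_mem B hi₀))))
      (blocks_mono hJI.subset)
  have hRJ : #R + #J = #I := card_filter_add_card_filter_not _
  have hR : #R ≤ c m := (card_filter_or_le_load I m).trans (hload m)
  have hloop : u = v → 2 * #R ≤ c u := fun huv => by
    have htop := fun i hi => eq_iff_eq_of_forall_le hAB hi₀ hmax (i := i) hi
    have hAR : {i ∈ I | A i = m} = R := filter_congr fun i hi => by have := htop i hi; omega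
    have hBR : {i ∈ I | B i = m} = R := filter_congr fun i hi => by have := htop i hi; omega
    calc 2 * #R = load A B I m := by rw [load, hAR, hBR]; ring
      _ ≤ c u := by rw [hm, ← huv, min_self]; exact hload u
  have hpair := two_mul_add_card_pair_le hc hodd (hsub (by simp)) (hsub (by simp)) hR hloop
  have hext := sum_add_card_le_sum_add_card_of_subset hsub fun j hj => (hodd j hj).pos
  rw [sum_union hfresh, card_union_of_disjoint hfresh] at hext
  omega

end Blocks

lemma load_comp_le_card_fiber {n w : ℕ} (β : Fin n → ℕ) {a b : Fin w → Fin n}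
    (ha : Injective a) (hb : Injective b) (hab : ∀ i j, a i ≠ b j) (j : ℕ) :
    load (β ∘ a) (β ∘ b) univ j ≤ #{p | β p = j} := by
  have hdisj : Disjoint (map ⟨a, ha⟩ {i | (β ∘ a) i = j}) (map ⟨b, hb⟩ {i | (β ∘ b) i = j}) := by
    simp only [disjoint_left, mem_map, mem_filter, mem_univ, true_and, Embedding.coeFn_mk]
    rintro _ ⟨i, -, rfl⟩ ⟨i', -, h⟩
    exact hab i i' h.symm
  rw [load, ← card_map ⟨a, ha⟩, ← card_map ⟨b, hb⟩, ← card_union_of_disjoint hdisj]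
  refine card_le_card (union_subset ?_ ?_) <;>
  · simp only [subset_iff, mem_map, mem_filter, mem_univ, true_and, Embedding.coeFn_mk,
      comp_apply]
    rintro _ ⟨i, hi, rfl⟩
    exact hi

theorem two_mul_add_card_image_le_of_hasWeakTwins {n w : ℕ} {β : Fin n → ℕ} (hβ : Monotone β)
    (hc : StrictMonoOn (fun j => #{p | β p = j}) (univ.image β))
    (hodd : ∀ j ∈ univ.image β, Odd #{p | β p = j}) (h : HasWeakTwins (layeredPerm β) w) :
    2 * w + #(univ.image β) ≤ n := by
  obtain ⟨a, b, ha, hb, hab, htwin⟩ := h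
  have hsync : ∀ i (hi : i + 1 < w), β (a ⟨i, by omega⟩) = β (a ⟨i + 1, hi⟩) ↔
      β (b ⟨i, by omega⟩) = β (b ⟨i + 1, hi⟩) := fun i hi => by
    have hstep : (⟨i, by omega⟩ : Fin w) < ⟨i + 1, hi⟩ := Fin.mk_lt_mk.mpr i.lt_succ_self
    rw [← layeredPerm_lt_layeredPerm_iff hβ (ha hstep),
      ← layeredPerm_lt_layeredPerm_iff hβ (hb hstep)]
    exact htwin i hi
  have hblocks : blocks (β ∘ a) (β ∘ b) univ ⊆ univ.image β :=
    union_subset (image_subset_iff.mpr fun i _ => mem_image_of_mem β (mem_univ _))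
      (image_subset_iff.mpr fun i _ => mem_image_of_mem β (mem_univ _))
  have hkey := two_mul_card_add_card_blocks_le univ
    (fun i _ i' _ => (hβ.comp ha.monotone).le_iff_le_of_succ (hβ.comp hb.monotone) hsync i i')
    (hc.mono (coe_subset.mpr hblocks)) (fun j hj => hodd j (hblocks hj))
    (load_comp_le_card_fiber β ha.injective hb.injective hab)
  have hext := sum_add_card_le_sum_add_card_of_subset hblocks fun j hj => (hodd j hj).pos
  rw [← card_eq_sum_card_image β univ, card_univ, Fintype.card_fin] at hext
  rw [card_univ, Fintype.card_fin] at hkey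
  omega

-- `k ≡ n (mod 2)` makes the last block, of size `n - (k - 1)²`, odd.
def numBlocks (n : ℕ) : ℕ := if Nat.sqrt n % 2 = n % 2 then Nat.sqrt n else Nat.sqrt n - 1

-- Block `j < k - 1` is `[j², (j + 1)²)`; the last block `[(k - 1)², n)` takes the rest.
def sqrtBlock (n : ℕ) (p : Fin n) : ℕ := min (Nat.sqrt p) (numBlocks n - 1)

lemma numBlocks_le_sqrt (n : ℕ) : numBlocks n ≤ Nat.sqrt n := by
  unfold numBlocks; split <;> omega

lemma sqrt_le_numBlocks_add_one (n : ℕ) : Nat.sqrt n ≤ numBlocks n + 1 := by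
  unfold numBlocks; split <;> omega

lemma numBlocks_sq_le (n : ℕ) : numBlocks n ^ 2 ≤ n :=
  Nat.le_sqrt'.mp (numBlocks_le_sqrt n)

lemma numBlocks_mod_two (n : ℕ) : numBlocks n % 2 = n % 2 := by
  unfold numBlocks
  split
  · assumption
  · have : Nat.sqrt n ≠ 0 := fun h => by simp_all [Nat.sqrt_eq_zero.mp h]
    omega

lemma sqrtBlock_monotone (n : ℕ) : Monotone (sqrtBlock n) := fun _ _ hpq =>
  min_le_min_right _ (Nat.sqrt_le_sqrt hpq)

lemma image_sqrtBlock {n : ℕ} (hk : 0 < numBlocks n) :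
    univ.image (sqrtBlock n) = range (numBlocks n) := by
  ext j
  simp only [mem_image, mem_univ, true_and, mem_range]
  refine ⟨fun ⟨p, hp⟩ => hp ▸ (min_le_right _ _).trans_lt (by omega), fun hj => ?_⟩
  have hjn : j ^ 2 < n := (Nat.pow_lt_pow_left hj two_ne_zero).trans_le (numBlocks_sq_le n)
  exact ⟨⟨j ^ 2, hjn⟩, by simp only [sqrtBlock, Nat.sqrt_eq']; omega⟩

lemma card_sqrtBlock_fiber {n j : ℕ} (hj : j < numBlocks n) :
    #{p : Fin n | sqrtBlock n p = j} =
      (if j + 1 < numBlocks n then (j + 1) ^ 2 else n) - j ^ 2 := by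
  have hkn := numBlocks_sq_le n
  split_ifs with hjk
  · have hb : (j + 1) ^ 2 ≤ n := (Nat.pow_le_pow_left hjk.le 2).trans hkn
    rw [← Fin.card_filter_le_val_lt (Nat.pow_le_pow_left j.le_succ 2) hb]
    congr 1
    refine filter_congr fun p _ => ?_
    rw [sqrtBlock, ← Nat.le_sqrt', ← Nat.sqrt_lt']
    omega
  · rw [← Fin.card_filter_le_val_lt ((Nat.pow_le_pow_left hj.le 2).trans hkn) le_rfl]
    congr 1
    refine filter_congr fun p _ => ?_
    rw [sqrtBlock, ← Nat.le_sqrt']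
    have := p.isLt
    omega

lemma odd_card_sqrtBlock_fiber {n j : ℕ} (hj : j < numBlocks n) :
    Odd #{p : Fin n | sqrtBlock n p = j} := by
  have hsq : (j + 1) ^ 2 = j ^ 2 + 2 * j + 1 := by ring
  rw [card_sqrtBlock_fiber hj]
  split_ifs with hjk
  · exact ⟨j, by omega⟩
  · have hkn := numBlocks_sq_le n
    have hk := numBlocks_mod_two n
    rw [show numBlocks n = j + 1 by omega] at hkn hk
    rw [Nat.odd_sub (by omega), Nat.even_pow' two_ne_zero, Nat.odd_iff, Nat.even_iff]
    omega

lemma strictMonoOn_card_sqrtBlock_fiber (n : ℕ) :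
    StrictMonoOn (fun j => #{p : Fin n | sqrtBlock n p = j}) (Set.Iio (numBlocks n)) := by
  intro j hj j' hj' hjj'
  have hkn := numBlocks_sq_le n
  have hsq : ∀ i : ℕ, (i + 1) ^ 2 = i ^ 2 + 2 * i + 1 := fun i => by ring
  simp only [card_sqrtBlock_fiber hj, card_sqrtBlock_fiber hj', if_pos (show j + 1 < numBlocks n by
    simp only [Set.mem_Iio] at hj'; omega)]
  split_ifs with hjk
  · have := hsq j; have := hsq j'; omega
  · simp only [Set.mem_Iio] at hj'
    rw [show numBlocks n = j' + 1 by omega] at hkn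
    have := hsq j; have := hsq j'; omega

theorem two_mul_add_numBlocks_le_of_hasWeakTwins {n w : ℕ} (hk : 0 < numBlocks n)
    (h : HasWeakTwins (layeredPerm (sqrtBlock n)) w) : 2 * w + numBlocks n ≤ n := by
  have := two_mul_add_card_image_le_of_hasWeakTwins (sqrtBlock_monotone n)
    ((strictMonoOn_card_sqrtBlock_fiber n).mono (by simp [image_sqrtBlock hk]))
    (fun j hj => odd_card_sqrtBlock_fiber (by simpa [image_sqrtBlock hk] using hj)) h
  rwa [image_sqrtBlock hk, card_range] at this

lemma three_le_numBlocks {n : ℕ} (hn : 16 ≤ n) : 3 ≤ numBlocks n := by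
  have := sqrt_le_numBlocks_add_one n
  have : 4 ≤ Nat.sqrt n := Nat.le_sqrt'.mpr hn
  omega

lemma rpow_one_third_le_numBlocks {n : ℕ} (hn : 16 ≤ n) :
    (n : ℝ) ^ ((1 : ℝ) / 3) ≤ numBlocks n := by
  have hk := three_le_numBlocks hn
  have hsk := sqrt_le_numBlocks_add_one n
  have hcube : n ≤ numBlocks n ^ 3 := calc
    n ≤ (Nat.sqrt n + 1) ^ 2 := (Nat.lt_succ_sqrt' n).le
    _ ≤ (numBlocks n + 2) ^ 2 := Nat.pow_le_pow_left (by omega) 2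
    _ ≤ numBlocks n ^ 3 := by nlinarith [Nat.mul_le_mul hk hk]
  calc (n : ℝ) ^ ((1 : ℝ) / 3) ≤ ((numBlocks n : ℝ) ^ 3) ^ ((1 : ℝ) / 3) :=
        Real.rpow_le_rpow (by positivity) (by exact_mod_cast hcube) (by norm_num)
    _ = numBlocks n := by
      rw [one_div]
      exact_mod_cast Real.pow_rpow_inv_natCast (Nat.cast_nonneg _) (n := 3) (by norm_num)

end WeakTwins

/-- Upper bound: there is `c > 0` such that for all large `n`, some permutation of `[n]`
has no weak twins of length greater than `n/2 - c n^{1/3}`. -/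
theorem stmt_5 : ∃ c : ℝ, 0 < c ∧ ∃ n₀ : ℕ, ∀ n : ℕ, n₀ ≤ n →
    ∃ π : Equiv.Perm (Fin n), ∀ w : ℕ, HasWeakTwins π w →
      (w : ℝ) ≤ (n : ℝ) / 2 - c * (n : ℝ) ^ ((1 : ℝ) / 3) := by
  refine ⟨1 / 2, by norm_num, 16, fun n hn =>
    ⟨WeakTwins.layeredPerm (WeakTwins.sqrtBlock n), fun w hw => ?_⟩⟩
  have hk := WeakTwins.three_le_numBlocks hn
  have hbound : (2 * w + WeakTwins.numBlocks n : ℝ) ≤ n := by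
    exact_mod_cast WeakTwins.two_mul_add_numBlocks_le_of_hasWeakTwins (by omega) hw
  have := WeakTwins.rpow_one_third_le_numBlocks hn
  linarith
end

section
/- For a uniformly random permutation Π of [n] and a fixed index i with 1 ≤ i ≤ n-4, the probability that the 5-tuple {i,…,i+4} is cornered equals 8/60 = 2/15. -/
/-- The value of the permutation `π` at the (0-indexed) position `i`, as a natural
number (junk value `0` outside the range). -/
def pval {n : ℕ} (π : Equiv.Perm (Fin n)) (i : ℕ) : ℕ :=
  if h : i < n then (π ⟨i, h⟩).val else 0

/-- Position `i` (0-indexed) is extremal in `π`: it is an endpoint, or a strict local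
maximum, or a strict local minimum. -/
def IsExtremal {n : ℕ} (π : Equiv.Perm (Fin n)) (i : ℕ) : Prop :=
  i < n ∧ (i = 0 ∨ i = n - 1 ∨
    (pval π (i - 1) < pval π i ∧ pval π (i + 1) < pval π i) ∨
    (pval π i < pval π (i - 1) ∧ pval π i < pval π (i + 1)))

instance {n : ℕ} (π : Equiv.Perm (Fin n)) : DecidablePred (IsExtremal π) := fun i => by
  unfold IsExtremal; infer_instance

/-- `e(π)`: the number of extremal points of `π`. -/
def extremalCount {n : ℕ} (π : Equiv.Perm (Fin n)) : ℕ :=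
  ((Finset.range n).filter (IsExtremal π)).card
/-- `f i, f (i+1), f (i+2)` is strictly monotone. -/
def Mono3 (f : ℕ → ℕ) (i : ℕ) : Prop :=
  (f i < f (i + 1) ∧ f (i + 1) < f (i + 2)) ∨ (f (i + 2) < f (i + 1) ∧ f (i + 1) < f i)

/-- `f i, …, f (i+3)` is strictly monotone. -/
def Mono4 (f : ℕ → ℕ) (i : ℕ) : Prop :=
  (f i < f (i + 1) ∧ f (i + 1) < f (i + 2) ∧ f (i + 2) < f (i + 3)) ∨
  (f (i + 3) < f (i + 2) ∧ f (i + 2) < f (i + 1) ∧ f (i + 1) < f i)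

/-- `f i, …, f (i+4)` is strictly monotone. -/
def Mono5 (f : ℕ → ℕ) (i : ℕ) : Prop :=
  (f i < f (i + 1) ∧ f (i + 1) < f (i + 2) ∧ f (i + 2) < f (i + 3) ∧ f (i + 3) < f (i + 4)) ∨
  (f (i + 4) < f (i + 3) ∧ f (i + 3) < f (i + 2) ∧ f (i + 2) < f (i + 1) ∧ f (i + 1) < f i)

/-- The 5-tuple of consecutive positions `i, …, i+4` is cornered: the first four or the
last four values are monotone, but all five are not. -/
def Cornered {n : ℕ} (π : Equiv.Perm (Fin n)) (i : ℕ) : Prop :=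
  (Mono4 (pval π) i ∨ Mono4 (pval π) (i + 1)) ∧ ¬ Mono5 (pval π) i

/-- The 5-tuple of consecutive positions `i, …, i+4` is crooked: the middle three values
are monotone, but no four consecutive values are. -/
def Crooked {n : ℕ} (π : Equiv.Perm (Fin n)) (i : ℕ) : Prop :=
  Mono3 (pval π) (i + 1) ∧ ¬ Mono4 (pval π) i ∧ ¬ Mono4 (pval π) (i + 1)

instance {n : ℕ} (π : Equiv.Perm (Fin n)) : DecidablePred (Cornered π) := fun i => by
  unfold Cornered Mono4 Mono5; infer_instance

instance {n : ℕ} (π : Equiv.Perm (Fin n)) : DecidablePred (Crooked π) := fun i => by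
  unfold Crooked Mono3 Mono4; infer_instance

/-- `co(π)`: the number of cornered 5-tuples of consecutive positions of `π`. -/
def corneredCount {n : ℕ} (π : Equiv.Perm (Fin n)) : ℕ :=
  ((Finset.range (n - 4)).filter (Cornered π)).card

/-- `cr(π)`: the number of crooked 5-tuples of consecutive positions of `π`. -/
def crookedCount {n : ℕ} (π : Equiv.Perm (Fin n)) : ℕ :=
  ((Finset.range (n - 4)).filter (Crooked π)).card

/-!
The relative order of `π` on the window `i, …, i + 4` is uniformly distributed over `S₅`:
precomposing `π` with a permutation of the window is a bijection of `Sₙ`, so double counting pairs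
`(π, σ) ∈ Sₙ × S₅` gives `5! · #{π cornered} = n! · #{σ ∈ S₅ cornered}`. Exactly `16` patterns
in `S₅` are cornered: if the first four values increase, the fifth value may take any relative rank
except the largest; likewise for the last four, these two cases are disjoint, and the
decreasing cases are symmetric. Hence the probability is `16 / 120 = 2 / 15`.
-/

open Finset
open scoped Nat

def OrderInvariant {k : ℕ} (P : (Fin k → ℕ) → Prop) : Prop :=
  ∀ f g : Fin k → ℕ, (∀ a b, f a < f b ↔ g a < g b) → (P f ↔ P g)

theorem exists_perm_lt_iff {k : ℕ} {α : Type*} [LinearOrder α] {f : Fin k → α}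
    (hf : Function.Injective f) : ∃ ρ : Equiv.Perm (Fin k), ∀ a b, f a < f b ↔ ρ a < ρ b := by
  have hmono : StrictMono (f ∘ Tuple.sort f) :=
    (Tuple.monotone_sort f).strictMono_of_injective (hf.comp (Tuple.sort f).injective)
  refine ⟨(Tuple.sort f)⁻¹, fun a b => ?_⟩
  simpa using hmono.lt_iff_lt (a := (Tuple.sort f)⁻¹ a) (b := (Tuple.sort f)⁻¹ b)

def windowEmb {k n i : ℕ} (h : i + k ≤ n) : Fin k ↪ Fin n :=
  ⟨fun j => ⟨i + j, by omega⟩, fun a b hab => by simpa [Fin.ext_iff] using hab⟩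

theorem windowEmb_apply {k n i : ℕ} (h : i + k ≤ n) (j : Fin k) :
    windowEmb h j = ⟨i + j, by omega⟩ :=
  rfl

section
variable {k n : ℕ} (P : (Fin k → ℕ) → Prop) [DecidablePred P] (e : Fin k ↪ Fin n)

theorem card_filter_pattern_comp_perm (σ : Equiv.Perm (Fin k)) :
    #{π : Equiv.Perm (Fin n) | P (fun j => π (e (σ j)))} =
      #{π : Equiv.Perm (Fin n) | P (fun j => π (e j))} := by
  refine Finset.card_equiv (Equiv.mulRight (σ.viaFintypeEmbedding e)) fun π => ?_
  simp [Equiv.Perm.viaFintypeEmbedding_apply_image]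

variable {P}

theorem card_perm_filter_pattern_comp {f : Fin k → ℕ} (hf : Function.Injective f)
    (hP : OrderInvariant P) :
    #{σ : Equiv.Perm (Fin k) | P (fun j => f (σ j))} =
      #{σ : Equiv.Perm (Fin k) | P (fun j => σ j)} := by
  obtain ⟨ρ, hρ⟩ := exists_perm_lt_iff hf
  refine Finset.card_equiv (Equiv.mulLeft ρ) fun σ => ?_
  simp only [mem_filter, mem_univ, true_and, Equiv.coe_mulLeft, Equiv.Perm.mul_apply]
  exact hP _ _ fun a b => (hρ _ _).trans Fin.lt_def

theorem factorial_mul_card_filter_pattern (hP : OrderInvariant P) :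
    k ! * #{π : Equiv.Perm (Fin n) | P (fun j => π (e j))} =
      n ! * #{σ : Equiv.Perm (Fin k) | P (fun j => σ j)} := by
  calc k ! * #{π : Equiv.Perm (Fin n) | P (fun j => π (e j))}
      = ∑ σ : Equiv.Perm (Fin k), #{π : Equiv.Perm (Fin n) | P (fun j => π (e (σ j)))} := by
        simp [card_filter_pattern_comp_perm, Fintype.card_perm]
    _ = ∑ π : Equiv.Perm (Fin n), #{σ : Equiv.Perm (Fin k) | P (fun j => π (e (σ j)))} := by
        simp only [card_filter]; exact Finset.sum_comm
    _ = n ! * #{σ : Equiv.Perm (Fin k) | P (fun j => σ j)} := by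
        rw [Finset.sum_congr rfl fun π _ => card_perm_filter_pattern_comp (f := fun j => π (e j))
          (Fin.val_injective.comp (π.injective.comp e.injective)) hP]
        simp [Fintype.card_perm]
end

-- `g` extends `f` by `0` exactly as `pval` does, so `Cornered` is this property of a window.
def IsCorneredPattern (f : Fin 5 → ℕ) : Prop :=
  let g : ℕ → ℕ := fun m => if h : m < 5 then f ⟨m, h⟩ else 0
  (Mono4 g 0 ∨ Mono4 g 1) ∧ ¬ Mono5 g 0

instance : DecidablePred IsCorneredPattern := fun f => by
  unfold IsCorneredPattern Mono4 Mono5; infer_instance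

theorem orderInvariant_isCorneredPattern : OrderInvariant IsCorneredPattern := fun f g hfg => by
  simp only [IsCorneredPattern, Mono4, Mono5, Nat.reduceAdd, Nat.reduceLT, dite_true, hfg]

theorem cornered_iff_isCorneredPattern {n i : ℕ} (h : i + 5 ≤ n) (π : Equiv.Perm (Fin n)) :
    Cornered π i ↔ IsCorneredPattern (fun j => π (windowEmb h j)) := by
  simp only [Cornered, IsCorneredPattern, Mono4, Mono5, pval, windowEmb_apply, add_zero, add_assoc,
    Nat.reduceAdd, Nat.reduceLT, dite_true, show i < n by omega, show i + 1 < n by omega,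
    show i + 2 < n by omega, show i + 3 < n by omega, show i + 4 < n by omega]

set_option maxRecDepth 10000 in
theorem card_isCorneredPattern_perm :
    #{σ : Equiv.Perm (Fin 5) | IsCorneredPattern (fun j => σ j)} = 16 := by
  decide

/-- The probability that a fixed 5-tuple of consecutive positions of a uniformly random
permutation is cornered equals `8/60 = 2/15`. -/
theorem stmt_9 (n i : ℕ) (h : i + 5 ≤ n) :
    15 * Nat.card {π : Equiv.Perm (Fin n) | Cornered π i} =
      2 * Nat.card (Equiv.Perm (Fin n)) := by
  have hcount := factorial_mul_card_filter_pattern (windowEmb h) orderInvariant_isCorneredPattern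
  rw [card_isCorneredPattern_perm, ← filter_congr fun π _ => cornered_iff_isCorneredPattern h π] at hcount
  rw [Nat.card_eq_card_toFinset, Set.toFinset_ofPred, Nat.card_perm, Nat.card_eq_fintype_card,
    Fintype.card_fin]
  simp only [Nat.factorial, Nat.succ_eq_add_one] at hcount
  omega
end

section
/- For a uniformly random permutation Π of [n] and a fixed index i with 1 ≤ i ≤ n-4, the probability that the 5-tuple {i,…,i+4} is crooked equals 11/60. -/
/-!
Crookedness of the positions `i, …, i+4` only depends on the relative order of the five values
there. Right multiplication by a permutation `σ` of the window permutes these values; since the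
action is free, double counting the pairs `(π, σ)` with `π * σ` crooked shows that the crooked
permutations have density `#{crooked patterns in S₅} / 5! = 22 / 120`.
-/

open Finset Equiv Nat

def IsOrderInvariant {ι α : Type*} [LT α] (P : (ι → α) → Prop) : Prop :=
  ∀ ⦃v w : ι → α⦄, (∀ a b, v a < v b ↔ w a < w b) → (P v ↔ P w)

section Pattern

variable {m : ℕ} {α : Type*} [LinearOrder α]

lemma exists_perm_lt_iff_lt {v w : Fin m → α} (hv : v.Injective) (hw : w.Injective) :
    ∃ e : Perm (Fin m), ∀ a b, v a < v b ↔ w (e a) < w (e b) := by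
  have hsv := (Tuple.monotone_sort v).strictMono_of_injective (hv.comp (Tuple.sort v).injective)
  have hsw := (Tuple.monotone_sort w).strictMono_of_injective (hw.comp (Tuple.sort w).injective)
  refine ⟨(Tuple.sort v).symm.trans (Tuple.sort w), fun a b => ?_⟩
  have := (hsv.lt_iff_lt (a := (Tuple.sort v).symm a) (b := (Tuple.sort v).symm b)).trans
    (hsw.lt_iff_lt).symm
  simpa using this

lemma card_filter_comp_perm_eq {P : (Fin m → α) → Prop} [DecidablePred P]
    (hP : IsOrderInvariant P) {v w : Fin m → α} (hv : v.Injective) (hw : w.Injective) :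
    #{σ : Perm (Fin m) | P (v ∘ σ)} = #{σ : Perm (Fin m) | P (w ∘ σ)} := by
  obtain ⟨e, he⟩ := exists_perm_lt_iff_lt hv hw
  refine card_equiv (Equiv.mulLeft e) fun σ => ?_
  simp only [mem_filter, mem_univ, true_and, coe_mulLeft]
  exact hP fun a b => he (σ a) (σ b)

end Pattern

section Window

variable {m n i : ℕ}

def window (π : Perm (Fin n)) (i m : ℕ) : Fin m → ℕ := fun k => pval π (i + k)

lemma window_injective (h : i + m ≤ n) (π : Perm (Fin n)) : (window π i m).Injective := by
  intro a b hab
  simp only [window, pval, dif_pos (show i + a < n by omega), dif_pos (show i + b < n by omega)]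
    at hab
  have := π.injective (Fin.ext hab)
  simp only [Fin.mk.injEq, Nat.add_left_cancel_iff] at this
  exact Fin.ext this

lemma window_mul_viaEmbedding (h : i + m ≤ n) (π : Perm (Fin n)) (σ : Perm (Fin m)) :
    window (π * σ.viaEmbedding ((Fin.natAddEmb i).trans (Fin.castLEEmb h))) i m =
      window π i m ∘ σ := by
  funext k
  have hk : (⟨i + k, by omega⟩ : Fin n) = (Fin.natAddEmb i).trans (Fin.castLEEmb h) k := rfl
  simp only [window, Function.comp_apply, pval, dif_pos (show i + k < n by omega),
    dif_pos (show i + σ k < n by omega), hk, Perm.mul_apply, Perm.viaEmbedding_apply]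
  rfl

theorem factorial_mul_card_filter_window (h : i + m ≤ n) {P : (Fin m → ℕ) → Prop}
    [DecidablePred P] (hP : IsOrderInvariant P) :
    m ! * #{π : Perm (Fin n) | P (window π i m)} =
      n ! * #{σ : Perm (Fin m) | P (fun k => (σ k : ℕ))} := by
  let ι := (Fin.natAddEmb i).trans (Fin.castLEEmb h)
  let r (π : Perm (Fin n)) (σ : Perm (Fin m)) : Prop := P (window (π * σ.viaEmbedding ι) i m)
  have hcount := sum_card_bipartiteAbove_eq_sum_card_bipartiteBelow (s := univ) (t := univ) r
  have above (π : Perm (Fin n)) :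
      #(univ.bipartiteAbove r π) = #{σ : Perm (Fin m) | P (fun k => (σ k : ℕ))} := by
    simp only [bipartiteAbove, r, ι, window_mul_viaEmbedding h]
    exact card_filter_comp_perm_eq hP (window_injective h π) Fin.val_injective
  have below (σ : Perm (Fin m)) :
      #(univ.bipartiteBelow r σ) = #{π : Perm (Fin n) | P (window π i m)} :=
    card_equiv (Equiv.mulRight (σ.viaEmbedding ι)) (by simp [r])
  simp only [above, below, sum_const, Finset.card_univ, Fintype.card_perm, Fintype.card_fin,
    smul_eq_mul] at hcount
  rw [← hcount, mul_comm]

end Window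

-- `Fin.ofNat 5` wraps around, but only the positions `0, …, 4` are read.
def CrookedTuple (v : Fin 5 → ℕ) : Prop :=
  Mono3 (v ∘ Fin.ofNat 5) 1 ∧ ¬ Mono4 (v ∘ Fin.ofNat 5) 0 ∧ ¬ Mono4 (v ∘ Fin.ofNat 5) 1

instance : DecidablePred CrookedTuple := fun v => by
  unfold CrookedTuple Mono3 Mono4; infer_instance

lemma isOrderInvariant_crookedTuple : IsOrderInvariant CrookedTuple := fun v w hvw => by
  simp only [CrookedTuple, Mono3, Mono4, Function.comp_apply, hvw]

lemma crooked_iff_crookedTuple {n : ℕ} (π : Perm (Fin n)) (i : ℕ) :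
    Crooked π i ↔ CrookedTuple (window π i 5) := by
  simp only [Crooked, CrookedTuple, Mono3, Mono4, window, Function.comp_apply, Fin.val_ofNat,
    add_assoc]
  norm_num

lemma card_crookedTuple_perm : #{σ : Perm (Fin 5) | CrookedTuple (fun k => (σ k : ℕ))} = 22 := by
  decide

/-- The probability that a fixed 5-tuple of consecutive positions of a uniformly random
permutation is crooked equals `11/60`. -/
theorem stmt_10 (n i : ℕ) (h : i + 5 ≤ n) :
    60 * Nat.card {π : Equiv.Perm (Fin n) | Crooked π i} =
      11 * Nat.card (Equiv.Perm (Fin n)) := by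
  have key := factorial_mul_card_filter_window h isOrderInvariant_crookedTuple
  simp only [← crooked_iff_crookedTuple, card_crookedTuple_perm] at key
  simp only [Nat.card_eq_fintype_card, Fintype.card_perm, Fintype.card_fin,
    Fintype.card_subtype, Set.mem_ofPred_eq]
  rw [show (5 ! : ℕ) = 120 by rfl] at key
  omega
end

section
/- In a lucky six {i,…,i+5} of a permutation π of [n], the position i+3 (respectively i+2 for types (c),(d)) is an extremal point of π, and after removing all extremal points of π, the position i+2 (which survives the removal) becomes an extremal point of the resulting sub-permutation π'. -/
/-- Lucky six pattern (a): `x₁<x₂<x₃<x₄>x₅>x₆` and `x₃>x₅` (0-indexed offsets `0..5`). -/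
def LuckyA {n : ℕ} (π : Equiv.Perm (Fin n)) (i : ℕ) : Prop :=
  pval π i < pval π (i+1) ∧ pval π (i+1) < pval π (i+2) ∧ pval π (i+2) < pval π (i+3) ∧
  pval π (i+4) < pval π (i+3) ∧ pval π (i+5) < pval π (i+4) ∧ pval π (i+4) < pval π (i+2)

/-- Lucky six pattern (b): the reversal of all inequalities of (a). -/
def LuckyB {n : ℕ} (π : Equiv.Perm (Fin n)) (i : ℕ) : Prop :=
  pval π (i+1) < pval π i ∧ pval π (i+2) < pval π (i+1) ∧ pval π (i+3) < pval π (i+2) ∧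
  pval π (i+3) < pval π (i+4) ∧ pval π (i+4) < pval π (i+5) ∧ pval π (i+2) < pval π (i+4)

/-- Lucky six pattern (c): `x₁<x₂<x₃>x₄>x₅>x₆` and `x₂<x₄`. -/
def LuckyC {n : ℕ} (π : Equiv.Perm (Fin n)) (i : ℕ) : Prop :=
  pval π i < pval π (i+1) ∧ pval π (i+1) < pval π (i+2) ∧ pval π (i+3) < pval π (i+2) ∧
  pval π (i+4) < pval π (i+3) ∧ pval π (i+5) < pval π (i+4) ∧ pval π (i+1) < pval π (i+3)

/-- Lucky six pattern (d): the reversal of all inequalities of (c). -/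
def LuckyD {n : ℕ} (π : Equiv.Perm (Fin n)) (i : ℕ) : Prop :=
  pval π (i+1) < pval π i ∧ pval π (i+2) < pval π (i+1) ∧ pval π (i+2) < pval π (i+3) ∧
  pval π (i+3) < pval π (i+4) ∧ pval π (i+4) < pval π (i+5) ∧ pval π (i+3) < pval π (i+1)

/-- The 6-tuple of consecutive positions `i, …, i+5` is a lucky six. -/
def LuckySix {n : ℕ} (π : Equiv.Perm (Fin n)) (i : ℕ) : Prop :=
  LuckyA π i ∨ LuckyB π i ∨ LuckyC π i ∨ LuckyD π i

/-- The set of positions of `π` surviving the removal of all extremal points. -/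
def survivors (n : ℕ) (π : Equiv.Perm (Fin n)) : Set ℕ :=
  {j | j < n ∧ ¬ IsExtremal π j}

/-- `q` and `p` are consecutive members of `K` (with `q < p`). -/
def AdjIn (K : Set ℕ) (q p : ℕ) : Prop :=
  q ∈ K ∧ p ∈ K ∧ q < p ∧ ∀ m ∈ K, ¬ (q < m ∧ m < p)

/-- Position `p` is an extremal point of the sub-permutation of `π` induced by the
position set `K`: its value is larger (or smaller) than the values at both of its
neighbours in `K` (endpoints of `K` qualify vacuously). -/
def IsExtremalIn {n : ℕ} (π : Equiv.Perm (Fin n)) (K : Set ℕ) (p : ℕ) : Prop :=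
  p ∈ K ∧
    (((∀ q, AdjIn K q p → pval π q < pval π p) ∧ (∀ r, AdjIn K p r → pval π r < pval π p)) ∨
     ((∀ q, AdjIn K q p → pval π p < pval π q) ∧ (∀ r, AdjIn K p r → pval π p < pval π r)))

lemma extremal_max {n : ℕ} {π : Equiv.Perm (Fin n)} {j : ℕ} (hj : j < n)
    (h1 : pval π (j - 1) < pval π j) (h2 : pval π (j + 1) < pval π j) :
    IsExtremal π j := ⟨hj, Or.inr (Or.inr (Or.inl ⟨h1, h2⟩))⟩

lemma extremal_min {n : ℕ} {π : Equiv.Perm (Fin n)} {j : ℕ} (hj : j < n)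
    (h1 : pval π j < pval π (j - 1)) (h2 : pval π j < pval π (j + 1)) :
    IsExtremal π j := ⟨hj, Or.inr (Or.inr (Or.inr ⟨h1, h2⟩))⟩

lemma not_extremal_inc {n : ℕ} {π : Equiv.Perm (Fin n)} {j : ℕ}
    (h0 : j ≠ 0) (hn : j + 1 ≠ n)
    (h1 : pval π (j - 1) < pval π j) (h2 : pval π j < pval π (j + 1)) :
    ¬ IsExtremal π j := by
  rintro ⟨hjn, (rfl | he | ⟨a, b⟩ | ⟨a, b⟩)⟩
  · exact h0 rfl
  · omega
  · omega
  · omega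

lemma not_extremal_dec {n : ℕ} {π : Equiv.Perm (Fin n)} {j : ℕ}
    (h0 : j ≠ 0) (hn : j + 1 ≠ n)
    (h1 : pval π j < pval π (j - 1)) (h2 : pval π (j + 1) < pval π j) :
    ¬ IsExtremal π j := by
  rintro ⟨hjn, (rfl | he | ⟨a, b⟩ | ⟨a, b⟩)⟩
  · exact h0 rfl
  · omega
  · omega
  · omega

lemma adj_left_eq {K : Set ℕ} {a p q : ℕ} (ha : a ∈ K) (hap : a < p)
    (hbet : ∀ m, a < m → m < p → m ∉ K) (hadj : AdjIn K q p) : q = a := by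
  obtain ⟨hq, -, hqp, hno⟩ := hadj
  rcases lt_trichotomy q a with h1 | h1 | h1
  · exact absurd ⟨h1, hap⟩ (hno a ha)
  · exact h1
  · exact absurd hq (hbet q h1 hqp)

lemma adj_right_eq {K : Set ℕ} {b p r : ℕ} (hb : b ∈ K) (hpb : p < b)
    (hbet : ∀ m, p < m → m < b → m ∉ K) (hadj : AdjIn K p r) : r = b := by
  obtain ⟨-, hr, hpr, hno⟩ := hadj
  rcases lt_trichotomy r b with h1 | h1 | h1
  · exact absurd hr (hbet r hpr h1)
  · exact h1
  · exact absurd ⟨hpb, h1⟩ (hno b hb)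

/-- In a lucky six `{i,…,i+5}` of types (a),(b), the position `i+3` is extremal in `π`
and the position `i+2` survives the removal of the extremal points of `π` and is extremal
in the resulting sub-permutation `π'`; for types (c),(d), the same holds with the roles
of `i+2` and `i+3` interchanged.  (Positions are 0-indexed offsets.) -/
theorem stmt_12 (n i : ℕ) (π : Equiv.Perm (Fin n)) (h : i + 6 ≤ n) :
    (LuckyA π i ∨ LuckyB π i →
      IsExtremal π (i + 3) ∧ (i + 2) ∈ survivors n π ∧
        IsExtremalIn π (survivors n π) (i + 2)) ∧
    (LuckyC π i ∨ LuckyD π i →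
      IsExtremal π (i + 2) ∧ (i + 3) ∈ survivors n π ∧
        IsExtremalIn π (survivors n π) (i + 3)) := by
  constructor
  · rintro (⟨h1, h2, h3, h4, h5, h6⟩ | ⟨h1, h2, h3, h4, h5, h6⟩)
    · -- pattern (a): i+3 local max, i+2 survives, local max in π'
      have e3 : IsExtremal π (i + 3) := extremal_max (by omega) h3 h4
      have s1 : (i + 1) ∈ survivors n π :=
        ⟨by omega, not_extremal_inc (by omega) (by omega) h1 h2⟩
      have s2 : (i + 2) ∈ survivors n π :=
        ⟨by omega, not_extremal_inc (by omega) (by omega) h2 h3⟩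
      have s4 : (i + 4) ∈ survivors n π :=
        ⟨by omega, not_extremal_dec (by omega) (by omega) h4 h5⟩
      refine ⟨e3, s2, s2, Or.inl ⟨?_, ?_⟩⟩
      · intro q hq
        have hq1 : q = i + 1 :=
          adj_left_eq s1 (by omega) (by intro m hm1 hm2 _; omega) hq
        rw [hq1]; exact h2
      · intro r hr
        have hr4 : r = i + 4 := by
          refine adj_right_eq s4 (by omega) ?_ hr
          intro m hm1 hm2 hmem
          have : m = i + 3 := by omega
          rw [this] at hmem
          exact hmem.2 e3
        rw [hr4]; exact h6
    · -- pattern (b): i+3 local min, i+2 survives, local min in π'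
      have e3 : IsExtremal π (i + 3) := extremal_min (by omega) h3 h4
      have s1 : (i + 1) ∈ survivors n π :=
        ⟨by omega, not_extremal_dec (by omega) (by omega) h1 h2⟩
      have s2 : (i + 2) ∈ survivors n π :=
        ⟨by omega, not_extremal_dec (by omega) (by omega) h2 h3⟩
      have s4 : (i + 4) ∈ survivors n π :=
        ⟨by omega, not_extremal_inc (by omega) (by omega) h4 h5⟩
      refine ⟨e3, s2, s2, Or.inr ⟨?_, ?_⟩⟩
      · intro q hq
        have hq1 : q = i + 1 :=
          adj_left_eq s1 (by omega) (by intro m hm1 hm2 _; omega) hq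
        rw [hq1]; exact h2
      · intro r hr
        have hr4 : r = i + 4 := by
          refine adj_right_eq s4 (by omega) ?_ hr
          intro m hm1 hm2 hmem
          have : m = i + 3 := by omega
          rw [this] at hmem
          exact hmem.2 e3
        rw [hr4]; exact h6
  · rintro (⟨h1, h2, h3, h4, h5, h6⟩ | ⟨h1, h2, h3, h4, h5, h6⟩)
    · -- pattern (c): i+2 local max, i+3 survives, local max in π'
      have e2 : IsExtremal π (i + 2) := extremal_max (by omega) h2 h3
      have s1 : (i + 1) ∈ survivors n π :=
        ⟨by omega, not_extremal_inc (by omega) (by omega) h1 h2⟩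
      have s3 : (i + 3) ∈ survivors n π :=
        ⟨by omega, not_extremal_dec (by omega) (by omega) h3 h4⟩
      have s4 : (i + 4) ∈ survivors n π :=
        ⟨by omega, not_extremal_dec (by omega) (by omega) h4 h5⟩
      refine ⟨e2, s3, s3, Or.inl ⟨?_, ?_⟩⟩
      · intro q hq
        have hq1 : q = i + 1 := by
          refine adj_left_eq s1 (by omega) ?_ hq
          intro m hm1 hm2 hmem
          have : m = i + 2 := by omega
          rw [this] at hmem
          exact hmem.2 e2
        rw [hq1]; exact h6
      · intro r hr
        have hr4 : r = i + 4 :=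
          adj_right_eq s4 (by omega) (by intro m hm1 hm2 _; omega) hr
        rw [hr4]; exact h4
    · -- pattern (d): i+2 local min, i+3 survives, local min in π'
      have e2 : IsExtremal π (i + 2) := extremal_min (by omega) h2 h3
      have s1 : (i + 1) ∈ survivors n π :=
        ⟨by omega, not_extremal_dec (by omega) (by omega) h1 h2⟩
      have s3 : (i + 3) ∈ survivors n π :=
        ⟨by omega, not_extremal_inc (by omega) (by omega) h3 h4⟩
      have s4 : (i + 4) ∈ survivors n π :=
        ⟨by omega, not_extremal_inc (by omega) (by omega) h4 h5⟩
      refine ⟨e2, s3, s3, Or.inr ⟨?_, ?_⟩⟩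
      · intro q hq
        have hq1 : q = i + 1 := by
          refine adj_left_eq s1 (by omega) ?_ hq
          intro m hm1 hm2 hmem
          have : m = i + 2 := by omega
          rw [this] at hmem
          exact hmem.2 e2
        rw [hq1]; exact h6
      · intro r hr
        have hr4 : r = i + 4 :=
          adj_right_eq s4 (by omega) (by intro m hm1 hm2 _; omega) hr
        rw [hr4]; exact h4
end

section
/- A longest alternating subsequence of any permutation π of [n] has length equal to the number of extremal points of π; in particular, the subsequence formed by the extremal points is a longest alternating subsequence. -/
/-- `a` lists the positions of an alternating subsequence of `π` of length `k`:
positions strictly increase and consecutive values strictly alternate in direction. -/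
def IsAltSubseq {n : ℕ} (π : Equiv.Perm (Fin n)) (k : ℕ) (a : Fin k → Fin n) : Prop :=
  StrictMono a ∧ ∀ i : ℕ, ∀ h : i + 2 < k,
    (π (a ⟨i, by omega⟩) < π (a ⟨i + 1, by omega⟩) ↔
      π (a ⟨i + 2, h⟩) < π (a ⟨i + 1, by omega⟩))

/-!
The interior extremal points of `π` are exactly the positions where the direction of `π`
(ascent or descent) changes. Between two consecutive extremal points `π` is therefore
monotone, and the direction at an extremal point flips, so the extremal points alternate.
Conversely, each step `a j → a (j + 1)` of an alternating subsequence `a` of length `k` contains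
an ascent or descent of the same direction as the step; two consecutive steps point in opposite
directions, so a direction change, i.e. an interior extremal point, lies between the two
witnesses. These `k - 2` interior extremal points together with the endpoints `0` and
`n - 1` give at least `k` extremal points.
-/

theorem Nat.rel_of_forall_mem_Ico_rel_succ {β : Type*} (r : β → β → Prop) [IsTrans β r]
    {f : ℕ → β} {a b : ℕ} (hab : a < b)
    (h : ∀ i, a ≤ i → i < b → r (f i) (f (i + 1))) : r (f a) (f b) := by
  induction b, hab using Nat.le_induction with
  | base => exact h a le_rfl a.lt_succ_self
  | succ b hab ih =>
    exact _root_.trans (ih fun i h₁ h₂ => h i h₁ (by omega)) (h b (by omega) b.lt_succ_self)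

theorem Finset.orderEmbOfFin_succ_le_of_mem {α : Type*} [LinearOrder α] {s : Finset α} {k : ℕ}
    (h : s.card = k) {i j : Fin k} (hij : j.val = i.val + 1) {x : α} (hx : x ∈ s)
    (hix : s.orderEmbOfFin h i < x) : s.orderEmbOfFin h j ≤ x := by
  obtain ⟨l, rfl⟩ : x ∈ Set.range (s.orderEmbOfFin h) := by
    rwa [Finset.range_orderEmbOfFin]
  rw [OrderEmbedding.lt_iff_lt, Fin.lt_def] at hix
  rw [OrderEmbedding.le_iff_le, Fin.le_def]
  omega

section

variable {n : ℕ} (π : Equiv.Perm (Fin n))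

theorem pval_of_lt {i : ℕ} (hi : i < n) : pval π i = π ⟨i, hi⟩ := dif_pos hi

theorem pval_lt_pval_iff (x y : Fin n) : pval π x < pval π y ↔ π x < π y := by
  rw [pval_of_lt π x.isLt, pval_of_lt π y.isLt, Fin.lt_def]

theorem pval_ne_pval {i j : ℕ} (hi : i < n) (hj : j < n) (hij : i ≠ j) :
    pval π i ≠ pval π j := by
  rw [pval_of_lt π hi, pval_of_lt π hj]
  exact fun h => hij (Fin.val_eq_of_eq (π.injective (Fin.ext h)))

def IsAscent (i : ℕ) : Prop := pval π i < pval π (i + 1)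

theorem isExtremal_succ_iff {i : ℕ} (hi : i + 2 < n) :
    IsExtremal π (i + 1) ↔ (IsAscent π i ↔ ¬IsAscent π (i + 1)) := by
  have h₁ := pval_ne_pval π (i := i) (j := i + 1) (by omega) (by omega) (by omega)
  have h₂ := pval_ne_pval π (i := i + 1) (j := i + 1 + 1) (by omega) (by omega) (by omega)
  simp only [IsExtremal, IsAscent, Nat.add_sub_cancel]
  omega

theorem isAscent_iff_of_forall_not_isExtremal {l r : ℕ} (hr : r < n)
    (h : ∀ t, l < t → t < r → ¬IsExtremal π t) {i : ℕ} (hli : l ≤ i) (hir : i < r) :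
    IsAscent π i ↔ IsAscent π l := by
  induction i, hli using Nat.le_induction with
  | base => rfl
  | succ i hli ih =>
    have hturn := (isExtremal_succ_iff π (by omega)).not.mp (h (i + 1) (by omega) hir)
    rw [← ih (by omega)]
    tauto

theorem pval_lt_iff_of_forall_isAscent_iff {l r : ℕ} (hlr : l < r) (hr : r < n)
    (h : ∀ i, l ≤ i → i < r → (IsAscent π i ↔ IsAscent π l)) :
    pval π l < pval π r ↔ IsAscent π l := by
  by_cases hl : IsAscent π l
  · exact iff_of_true
      (Nat.rel_of_forall_mem_Ico_rel_succ (· < ·) hlr fun i h₁ h₂ => (h i h₁ h₂).2 hl) hl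
  · refine iff_of_false (not_lt.2 (le_of_lt ?_)) hl
    refine Nat.rel_of_forall_mem_Ico_rel_succ (· > ·) hlr fun i h₁ h₂ => ?_
    have hi : ¬IsAscent π i := fun hi => hl ((h i h₁ h₂).1 hi)
    have := pval_ne_pval π (i := i) (j := i + 1) (by omega) (by omega) (by omega)
    simp only [IsAscent] at hi
    omega

theorem pval_lt_iff_of_forall_not_isExtremal {l r : ℕ} (hlr : l < r) (hr : r < n)
    (h : ∀ t, l < t → t < r → ¬IsExtremal π t) :
    pval π l < pval π r ↔ IsAscent π (r - 1) := by
  rw [isAscent_iff_of_forall_not_isExtremal π hr h (by omega) (by omega)]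
  exact pval_lt_iff_of_forall_isAscent_iff π hlr hr fun i h₁ h₂ =>
    isAscent_iff_of_forall_not_isExtremal π hr h h₁ h₂

theorem exists_isAscent_iff_pval_lt {l r : ℕ} (hlr : l < r) (hr : r < n) :
    ∃ t, l ≤ t ∧ t < r ∧ (IsAscent π t ↔ pval π l < pval π r) := by
  by_contra hne
  simp only [not_exists, not_and] at hne
  have hl := hne l le_rfl hlr
  refine hl (pval_lt_iff_of_forall_isAscent_iff π hlr hr fun i h₁ h₂ => ?_).symm
  have hi := hne i h₁ h₂
  tauto

theorem exists_isExtremal_of_not_isAscent_iff {t t' : ℕ} (htt' : t < t') (ht' : t' + 1 < n)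
    (h : ¬(IsAscent π t ↔ IsAscent π t')) : ∃ s, t < s ∧ s ≤ t' ∧ IsExtremal π s := by
  by_contra hs
  simp only [not_exists, not_and] at hs
  exact h (isAscent_iff_of_forall_not_isExtremal π ht'
    (fun s h₁ h₂ => hs s h₁ (by omega)) htt'.le (by omega)).symm

theorem pval_lt_iff_of_consecutive_isExtremal {p q r : ℕ} (hpq : p < q) (hqr : q < r)
    (hr : r < n) (hq : IsExtremal π q) (hpq' : ∀ t, p < t → t < q → ¬IsExtremal π t)
    (hqr' : ∀ t, q < t → t < r → ¬IsExtremal π t) :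
    pval π p < pval π q ↔ pval π r < pval π q := by
  obtain ⟨q, rfl⟩ : ∃ q', q = q' + 1 := ⟨q - 1, by omega⟩
  have hne := pval_ne_pval π (i := r) (j := q + 1) hr (by omega) (by omega)
  rw [pval_lt_iff_of_forall_not_isExtremal π hpq (by omega) hpq', Nat.add_sub_cancel,
    (isExtremal_succ_iff π (by omega)).mp hq,
    ← isAscent_iff_of_forall_not_isExtremal π hr hqr' (le_refl (q + 1)) hqr,
    ← pval_lt_iff_of_forall_isAscent_iff π hqr hr fun i h₁ h₂ =>
      isAscent_iff_of_forall_not_isExtremal π hr hqr' h₁ h₂]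
  omega

theorem exists_isAltSubseq_iff_isExtremal :
    ∃ a : Fin (extremalCount π) → Fin n, IsAltSubseq π (extremalCount π) a ∧
      ∀ j : Fin n, (∃ i, a i = j) ↔ IsExtremal π j.val := by
  set E := (Finset.range n).filter (IsExtremal π)
  set e := E.orderEmbOfFin (rfl : E.card = extremalCount π)
  have he : ∀ i, IsExtremal π (e i) := fun i =>
    (Finset.mem_filter.mp (E.orderEmbOfFin_mem rfl i)).2
  have hgap : ∀ i j : Fin (extremalCount π), j.val = i.val + 1 →
      ∀ t, e i < t → t < e j → ¬IsExtremal π t := fun i j hij t h₁ h₂ ht =>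
    (Finset.orderEmbOfFin_succ_le_of_mem rfl hij
      (Finset.mem_filter.mpr ⟨Finset.mem_range.mpr ht.1, ht⟩) h₁).not_gt h₂
  refine ⟨fun i => ⟨e i, (he i).1⟩, ⟨fun i j hij => e.strictMono hij, fun i hi => ?_⟩,
    fun j => ?_⟩
  · rw [← pval_lt_pval_iff, ← pval_lt_pval_iff]
    exact pval_lt_iff_of_consecutive_isExtremal π (e.strictMono (Fin.lt_def.2 (by simp)))
      (e.strictMono (Fin.lt_def.2 (by simp))) (he _).1 (he _) (hgap _ _ rfl) (hgap _ _ rfl)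
  · constructor
    · rintro ⟨i, rfl⟩
      exact he i
    · intro hj
      obtain ⟨i, hi⟩ : (j : ℕ) ∈ Set.range e := by
        rw [Finset.range_orderEmbOfFin]
        exact Finset.mem_filter.mpr ⟨Finset.mem_range.mpr j.isLt, hj⟩
      exact ⟨i, Fin.ext hi⟩

def extremalCountBelow (x : ℕ) : ℕ := ((Finset.range x).filter (IsExtremal π)).card

theorem extremalCountBelow_lt {x y s : ℕ} (hxs : x ≤ s) (hsy : s < y) (hs : IsExtremal π s) :
    extremalCountBelow π x < extremalCountBelow π y := by
  refine Finset.card_lt_card ((Finset.ssubset_iff_of_subset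
    (Finset.filter_subset_filter _ (Finset.range_subset_range.mpr (by omega)))).mpr ⟨s, ?_, ?_⟩)
  · exact Finset.mem_filter.mpr ⟨Finset.mem_range.mpr hsy, hs⟩
  · simp only [Finset.mem_filter, Finset.mem_range, not_and]
    omega

theorem exists_isAscent_iff_of_isAltSubseq {k : ℕ} {a : Fin k → Fin n} (ha : IsAltSubseq π k a)
    (j : ℕ) (hj : j + 1 < k) :
    ∃ t, (a ⟨j, by omega⟩ : ℕ) ≤ t ∧ t < a ⟨j + 1, hj⟩ ∧
      (IsAscent π t ↔ π (a ⟨j, by omega⟩) < π (a ⟨j + 1, hj⟩)) ∧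
      j < extremalCountBelow π (t + 1) := by
  obtain ⟨hmono, halt⟩ := ha
  have hstep : ∀ i (hi : i + 1 < k),
      (a ⟨i, Nat.lt_of_succ_lt hi⟩ : ℕ) < a ⟨i + 1, hi⟩ :=
    fun i hi => hmono (Fin.lt_def.2 (by simp))
  induction j with
  | zero =>
    obtain ⟨t, ht₁, ht₂, ht₃⟩ := exists_isAscent_iff_pval_lt π (hstep 0 hj) (a _).isLt
    exact ⟨t, ht₁, ht₂, ht₃.trans (pval_lt_pval_iff π _ _), (Nat.zero_le _).trans_lt
      (extremalCountBelow_lt π (Nat.zero_le 0) (Nat.succ_pos t) ⟨by omega, Or.inl rfl⟩)⟩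
  | succ j ih =>
    obtain ⟨t, -, ht₂, ht₃, ht₄⟩ := ih (by omega)
    obtain ⟨t', ht₁', ht₂', ht₃'⟩ :=
      exists_isAscent_iff_pval_lt π (hstep (j + 1) hj) (a _).isLt
    rw [pval_lt_pval_iff] at ht₃'
    have hflip : π (a ⟨j, by omega⟩) < π (a ⟨j + 1, by omega⟩) ↔
        π (a ⟨j + 1 + 1, hj⟩) < π (a ⟨j + 1, by omega⟩) := halt j hj
    have hne : π (a ⟨j + 1, by omega⟩) ≠ π (a ⟨j + 1 + 1, hj⟩) :=
      π.injective.ne (hmono.injective.ne (by simp))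
    have hturn : ¬(IsAscent π t ↔ IsAscent π t') := by
      rw [ht₃, ht₃', hflip, Fin.lt_def, Fin.lt_def]
      have := Fin.val_ne_of_ne hne
      omega
    obtain ⟨s, hs₁, hs₂, hs⟩ := exists_isExtremal_of_not_isAscent_iff π (t := t) (t' := t')
      (by omega) (by have := (a ⟨j + 1 + 1, hj⟩).isLt; omega) hturn
    have := extremalCountBelow_lt π (x := t + 1) (by omega) (by omega : s < t' + 1) hs
    exact ⟨t', ht₁', ht₂', ht₃', by omega⟩

theorem le_extremalCount_of_isAltSubseq {k : ℕ} {a : Fin k → Fin n} (ha : IsAltSubseq π k a) :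
    k ≤ extremalCount π := by
  show k ≤ extremalCountBelow π n
  rcases k with _ | _ | k
  · exact Nat.zero_le _
  · exact (Nat.zero_le _).trans_lt
      (extremalCountBelow_lt π le_rfl (a 0).pos ⟨(a 0).pos, Or.inl rfl⟩)
  · obtain ⟨t, -, ht, -, hcount⟩ := exists_isAscent_iff_of_isAltSubseq π ha k (by omega)
    have hlast := (a ⟨k + 1, by omega⟩).isLt
    have := extremalCountBelow_lt π (x := t + 1) (y := n) (s := n - 1) (by omega) (by omega)
      ⟨by omega, Or.inr (Or.inl rfl)⟩
    omega

end

theorem stmt_19_general (n : ℕ) (π : Equiv.Perm (Fin n)) :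
    (∃ a : Fin (extremalCount π) → Fin n, IsAltSubseq π (extremalCount π) a ∧
        ∀ j : Fin n, (∃ i, a i = j) ↔ IsExtremal π j.val) ∧
      ∀ k : ℕ, ∀ a : Fin k → Fin n, IsAltSubseq π k a → k ≤ extremalCount π :=
  ⟨exists_isAltSubseq_iff_isExtremal π, fun _ _ => le_extremalCount_of_isAltSubseq π⟩

/-- The number of extremal points of `π` is exactly the length of a longest alternating
subsequence of `π`: the extremal points themselves form an alternating subsequence, and
every alternating subsequence has length at most `e(π)`. -/
theorem stmt_19 (n : ℕ) (hn : 1 ≤ n) (π : Equiv.Perm (Fin n)) :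
    (∃ a : Fin (extremalCount π) → Fin n, IsAltSubseq π (extremalCount π) a ∧
        ∀ j : Fin n, (∃ i, a i = j) ↔ IsExtremal π j.val) ∧
      ∀ k : ℕ, ∀ a : Fin k → Fin n, IsAltSubseq π k a → k ≤ extremalCount π :=
  stmt_19_general n π
end
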